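/- Fix r ≥ 2 and x in the interior of the simplex Δ_r. Then Σ_{i=1}^r x_i g_i(x) ≤ 1/r. If r = 2, equality holds for every x ∈ Δ_2. If r ≥ 3, equality holds if and only if x = (1/r, …, 1/r). -/

import Mathlib

/-!
Write `c k = √(x k)`. Conditioning on `Z i = t`, the winner probability is
`g i = ∫ ∏_{k ≠ i} Φ(c k / c i * t) dγ(t)`. Symmetrizing `t ↦ -t` turns the integrand into
`∏ Φₖ + ∏ (1 - Φₖ)`, which for `t ≥ 0` is nondecreasing in each `Φₖ ∈ [1/2, 1]`; matching the
factors of `g i` and `g j` through the transposition `(i j)` shows that `g` is antitone in `x`,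
strictly so when `r ≥ 3`. Chebyshev's sum inequality for the oppositely ordered `x` and `g` then
gives `r ∑ x i * g i ≤ (∑ x i) (∑ g i) = 1`, with equality only if `x` is constant. For `r = 2`
the symmetrized integrand is identically `1`, so `g ≡ 1/2`.
-/

open MeasureTheory ProbabilityTheory Filter Real Topology

open scoped Classical

namespace ThompsonStability

variable {Ω : Type} [MeasurableSpace Ω]

/-- The standard normal cumulative distribution function `Φ`. -/
noncomputable def gaussCDF (x : ℝ) : ℝ := ((gaussianReal 0 1) (Set.Iic x)).toReal

/-- `pullCount A a t ω` is the number of pulls `N_{a,t}` of arm `a` during rounds `1,…,t`. -/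
def pullCount {K : ℕ} (A : ℕ → Ω → Fin K) (a : Fin K) (t : ℕ) (ω : Ω) : ℕ :=
  ((Finset.Icc 1 t).filter fun s => A s ω = a).card

/-- `pullTime A a k ω` is the time `T_a(k)` of the `k`-th pull of arm `a`. -/
noncomputable def pullTime {K : ℕ} (A : ℕ → Ω → Fin K) (a : Fin K) (k : ℕ) (ω : Ω) : ℕ :=
  sInf {t | k ≤ pullCount A a t ω}

/-- The reward process `R_{a,t} = μ_a + Z_{a,t}`, where the noise `Z_{a,t}` is the
coordinate `W (t, a, false)` of the ambient i.i.d. standard Gaussian family `W`. -/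
def reward {K : ℕ} (μ : Fin K → ℝ) (W : ℕ × Fin K × Bool → Ω → ℝ)
    (t : ℕ) (a : Fin K) (ω : Ω) : ℝ := μ a + W (t, a, false) ω

/-- The empirical mean `μ̂_{a,t}` of arm `a` after `t` rounds. -/
noncomputable def empMean {K : ℕ} (A : ℕ → Ω → Fin K) (R : ℕ → Fin K → Ω → ℝ)
    (a : Fin K) (t : ℕ) (ω : Ω) : ℝ :=
  (∑ s ∈ (Finset.Icc 1 t).filter fun s => A s ω = a, R s a ω) / (pullCount A a t ω : ℝ)

/-- The sample standard deviation `σ̂_{a,t}` of the rewards of arm `a` up to time `t`,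
with the convention that it equals `1` when `N_{a,t} ≤ 1`. -/
noncomputable def sampleSD {K : ℕ} (A : ℕ → Ω → Fin K) (R : ℕ → Fin K → Ω → ℝ)
    (a : Fin K) (t : ℕ) (ω : Ω) : ℝ :=
  if pullCount A a t ω ≤ 1 then 1
  else Real.sqrt ((∑ s ∈ (Finset.Icc 1 t).filter fun s => A s ω = a,
    (R s a ω - empMean A R a t ω) ^ 2) / ((pullCount A a t ω : ℝ) - 1))

/-- The history σ-algebra `F_t`, generated by `(A_1, R_{A_1,1}, …, A_t, R_{A_t,t})`. -/
def histSigma {K : ℕ} (A : ℕ → Ω → Fin K) (R : ℕ → Fin K → Ω → ℝ) (t : ℕ) :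
    MeasurableSpace Ω :=
  MeasurableSpace.comap
    (fun ω (s : Fin t) => (A ((s : ℕ) + 1) ω, R ((s : ℕ) + 1) (A ((s : ℕ) + 1) ω) ω))
    inferInstance

/-- The Thompson sample (index) `θ_{a,t+1} = μ̂_{a,t} + √(σ(𝒜)/N_{a,t}) ζ_{a,t+1}` used by
variance-inflated Thompson sampling, where `ζ_{a,t+1} = W (t+1, a, true)` is a fresh
standard Gaussian draw, so that `θ_{a,t+1} | F_t ~ N(μ̂_{a,t}, σ(𝒜)/N_{a,t})`,
independently across arms. -/
noncomputable def tsIndex {K : ℕ} (μ : Fin K → ℝ) (W : ℕ × Fin K × Bool → Ω → ℝ)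
    (σA : ℝ) (A : ℕ → Ω → Fin K) (t : ℕ) (a : Fin K) (ω : Ω) : ℝ :=
  empMean A (reward μ W) a t ω +
    Real.sqrt (σA / (pullCount A a t ω : ℝ)) * W (t + 1, a, true) ω

/-- The index `Υ_{a,t+1} = μ̂_{a,t} + ζ_{a,t+1}/√N_{a,t} + √(2 β(𝒜) log T / N_{a,t})` used by
Thompson sampling with mean bonus (the posterior sample `θ̃_{a,t+1}` plus the bonus
`B_{a,t}`), where `ζ_{a,t+1} = W (t+1, a, true)` is a fresh standard Gaussian draw. -/
noncomputable def mbIndex {K : ℕ} (μ : Fin K → ℝ) (W : ℕ × Fin K × Bool → Ω → ℝ)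
    (βA : ℝ) (T : ℕ) (A : ℕ → Ω → Fin K) (t : ℕ) (a : Fin K) (ω : Ω) : ℝ :=
  empMean A (reward μ W) a t ω + W (t + 1, a, true) ω / Real.sqrt (pullCount A a t ω : ℝ) +
    Real.sqrt (2 * βA * Real.log T / (pullCount A a t ω : ℝ))

/-- A run of variance-inflated Thompson sampling with inflation factor `σA` on the `K`-armed
Gaussian bandit with means `μ`: `W` is an i.i.d. family of standard Gaussians furnishing both
the reward noise (`… false`) and the posterior sampling randomness (`… true`); each arm is
pulled once during the initialization rounds `1,…,K`; and for every `t ≥ K` the next arm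
`A_{t+1}` is measurable with respect to the history `F_t` together with the fresh draws
`ζ_{·,t+1}`, and maximizes the Thompson index `θ_{·,t+1}`. -/
structure VarInflTS (K : ℕ) (P : Measure Ω) (μ : Fin K → ℝ) (σA : ℝ)
    (A : ℕ → Ω → Fin K) (W : ℕ × Fin K × Bool → Ω → ℝ) : Prop where
  meas_A : ∀ t, Measurable (A t)
  meas_W : ∀ i, Measurable (W i)
  indep_W : iIndepFun W P
  gauss_W : ∀ i, Measure.map (W i) P = gaussianReal 0 1
  init : ∀ ω (a : Fin K), pullCount A a K ω = 1
  adapted : ∀ t, K ≤ t →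
    Measurable[histSigma A (reward μ W) t ⊔
      MeasurableSpace.comap (fun ω (a : Fin K) => W (t + 1, a, true) ω) inferInstance]
      (A (t + 1))
  argmax : ∀ t, K ≤ t → ∀ ω (a : Fin K),
    tsIndex μ W σA A t a ω ≤ tsIndex μ W σA A t (A (t + 1) ω) ω

/-- A run (with horizon `T`) of Thompson sampling with mean bonus, with bonus strength `βA`,
on the `K`-armed Gaussian bandit with means `μ`; fields as in `VarInflTS`, with the selected
arm maximizing the bonus-shifted index `Υ_{·,t+1}`. -/
structure MeanBonusTS (K : ℕ) (P : Measure Ω) (μ : Fin K → ℝ) (βA : ℝ) (T : ℕ)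
    (A : ℕ → Ω → Fin K) (W : ℕ × Fin K × Bool → Ω → ℝ) : Prop where
  meas_A : ∀ t, Measurable (A t)
  meas_W : ∀ i, Measurable (W i)
  indep_W : iIndepFun W P
  gauss_W : ∀ i, Measure.map (W i) P = gaussianReal 0 1
  init : ∀ ω (a : Fin K), pullCount A a K ω = 1
  adapted : ∀ t, K ≤ t →
    Measurable[histSigma A (reward μ W) t ⊔
      MeasurableSpace.comap (fun ω (a : Fin K) => W (t + 1, a, true) ω) inferInstance]
      (A (t + 1))
  argmax : ∀ t, K ≤ t → ∀ ω (a : Fin K),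
    mbIndex μ W βA T A t a ω ≤ mbIndex μ W βA T A t (A (t + 1) ω) ω

/-- The concentration event `E_T`:
`|μ̂_{a,t} − μ_a| ≤ √(C log log T / N_{a,t})` for all (post-initialization) `t ≤ T` and `a`. -/
def concEvent {K : ℕ} (μ : Fin K → ℝ) (A : ℕ → Ω → Fin K) (W : ℕ × Fin K × Bool → Ω → ℝ)
    (Cc : ℝ) (T : ℕ) : Set Ω :=
  {ω | ∀ a : Fin K, ∀ t, K ≤ t → t ≤ T →
    |empMean A (reward μ W) a t ω - μ a| ≤
      Real.sqrt (Cc * Real.log (Real.log T) / (pullCount A a t ω : ℝ))}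

/-- The few-suboptimal-pulls event `Ω_T = {N_sub(T) ≤ σ(𝒜) log T log log T}`. -/
def fewSubEvent {K : ℕ} (μ : Fin K → ℝ) (μstar : ℝ) (A : ℕ → Ω → Fin K)
    (σA : ℝ) (T : ℕ) : Set Ω :=
  {ω | ∑ b ∈ Finset.univ.filter (fun b : Fin K => μ b ≠ μstar), (pullCount A b T ω : ℝ) ≤
    σA * Real.log T * Real.log (Real.log T)}

/-- The good event `G_T = G_{T,1} ∩ G_{T,2}` for Thompson sampling with mean bonus:
`G_{T,1}` is mean concentration at scale `√(C₁ log T / N_{a,t})`, and `G_{T,2}` bounds all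
the standard normal draws used by the algorithm by `√(2 log (2 K T³))`. -/
def goodEvent {K : ℕ} (μ : Fin K → ℝ) (A : ℕ → Ω → Fin K) (W : ℕ × Fin K × Bool → Ω → ℝ)
    (C₁ : ℝ) (T : ℕ) : Set Ω :=
  {ω | (∀ a : Fin K, ∀ t, K ≤ t → t ≤ T →
      |empMean A (reward μ W) a t ω - μ a| ≤
        Real.sqrt (C₁ * Real.log T / (pullCount A a t ω : ℝ))) ∧
    (∀ a : Fin K, ∀ t ≤ T, |W (t, a, true) ω| ≤ Real.sqrt (2 * Real.log (2 * K * T ^ 3)))}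

local notation "γ" => gaussianReal 0 1

instance : (gaussianReal 0 1).IsNegInvariant :=
  ⟨by simpa [Measure.neg] using gaussianReal_map_neg (μ := 0) (v := 1)⟩

instance : NullSingletonClass (gaussianReal 0 1) := nullSingletonClass_gaussianReal one_ne_zero

lemma gaussCDF_eq_cdf : gaussCDF = cdf γ := by
  ext u
  rw [cdf_eq_real, measureReal_def, gaussCDF]

lemma gaussCDF_nonneg (u : ℝ) : 0 ≤ gaussCDF u := gaussCDF_eq_cdf ▸ cdf_nonneg _ u

lemma gaussCDF_le_one (u : ℝ) : gaussCDF u ≤ 1 := gaussCDF_eq_cdf ▸ cdf_le_one _ u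

lemma measurable_gaussCDF : Measurable gaussCDF := gaussCDF_eq_cdf ▸ (cdf γ).mono.measurable

lemma gaussCDF_strictMono : StrictMono gaussCDF := by
  intro a b hab
  have hpos : γ (Set.Ioc a b) ≠ 0 := fun h =>
    (by simp [hab] : volume (Set.Ioc a b) ≠ 0) (gaussianReal_absolutelyContinuous' 0 one_ne_zero h)
  rw [← measure_cdf γ, StieltjesFunction.measure_Ioc, ne_eq, ENNReal.ofReal_eq_zero, not_le,
    sub_pos, ← gaussCDF_eq_cdf] at hpos
  exact hpos

lemma gaussCDF_neg (u : ℝ) : gaussCDF (-u) = 1 - gaussCDF u := by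
  have hIci : γ (Set.Iic (-u)) = γ (Set.Ioi u) := by
    rw [← Set.neg_Ici, Measure.measure_neg, measure_congr Ioi_ae_eq_Ici]
  rw [gaussCDF, gaussCDF, hIci, ← Set.compl_Iic, prob_compl_eq_one_sub measurableSet_Iic,
    ENNReal.toReal_sub_of_le prob_le_one ENNReal.one_ne_top, ENNReal.toReal_one]

lemma gaussCDF_zero : gaussCDF 0 = 1 / 2 := by
  linarith [neg_zero (G := ℝ) ▸ gaussCDF_neg 0]

lemma half_le_gaussCDF {u : ℝ} (hu : 0 ≤ u) : 1 / 2 ≤ gaussCDF u :=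
  gaussCDF_zero ▸ gaussCDF_strictMono.monotone hu

lemma half_lt_gaussCDF {u : ℝ} (hu : 0 < u) : 1 / 2 < gaussCDF u :=
  gaussCDF_zero ▸ gaussCDF_strictMono hu

lemma gaussCDF_lt_one (u : ℝ) : gaussCDF u < 1 :=
  (gaussCDF_strictMono (lt_add_one u)).trans_le (gaussCDF_le_one _)

section SymmetricComparison

variable {p q : ℝ → ℝ}

lemma integral_add_comp_neg_gaussianReal (hp : Integrable p γ) :
    ∫ t, (p t + p (-t)) ∂γ = 2 * ∫ t, p t ∂γ := by
  rw [integral_add hp hp.comp_neg, integral_neg_eq_self, two_mul]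

lemma add_comp_neg_le_of_nonneg (h : ∀ t, 0 ≤ t → p t + p (-t) ≤ q t + q (-t)) (t : ℝ) :
    p t + p (-t) ≤ q t + q (-t) := by
  rcases le_total 0 t with ht | ht
  · exact h t ht
  · simpa only [neg_neg, add_comm] using h (-t) (neg_nonneg.2 ht)

lemma integrable_add_comp_neg_gaussianReal (hp : Integrable p γ) :
    Integrable (fun t => p t + p (-t)) γ :=
  hp.add hp.comp_neg

lemma integral_le_integral_of_add_comp_neg_le (hp : Integrable p γ) (hq : Integrable q γ)
    (h : ∀ t, 0 ≤ t → p t + p (-t) ≤ q t + q (-t)) : ∫ t, p t ∂γ ≤ ∫ t, q t ∂γ := by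
  have := integral_mono (integrable_add_comp_neg_gaussianReal hp)
    (integrable_add_comp_neg_gaussianReal hq) (add_comp_neg_le_of_nonneg h)
  rw [integral_add_comp_neg_gaussianReal hp, integral_add_comp_neg_gaussianReal hq] at this
  linarith

lemma integral_lt_integral_of_add_comp_neg_lt (hp : Integrable p γ) (hq : Integrable q γ)
    (h : ∀ t, 0 ≤ t → p t + p (-t) ≤ q t + q (-t))
    (hlt : ∀ t, 0 < t → p t + p (-t) < q t + q (-t)) : ∫ t, p t ∂γ < ∫ t, q t ∂γ := by
  have hIoi : γ (Set.Ioi 0) ≠ 0 := fun h0 => by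
    simpa using gaussianReal_absolutelyContinuous' 0 one_ne_zero h0
  have hpos : 0 < ∫ t, ((q t + q (-t)) - (p t + p (-t))) ∂γ := by
    rw [integral_pos_iff_support_of_nonneg
      (fun t => sub_nonneg.2 (add_comp_neg_le_of_nonneg h t))
      ((integrable_add_comp_neg_gaussianReal hq).sub (integrable_add_comp_neg_gaussianReal hp))]
    exact (pos_iff_ne_zero.2 hIoi).trans_le
      (measure_mono fun t (ht : 0 < t) => (sub_pos.2 (hlt t ht)).ne')
  rw [integral_sub (integrable_add_comp_neg_gaussianReal hq)
    (integrable_add_comp_neg_gaussianReal hp), integral_add_comp_neg_gaussianReal hp,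
    integral_add_comp_neg_gaussianReal hq] at hpos
  linarith

end SymmetricComparison

lemma mul_add_one_sub_mul_le {a b F G F' G' : ℝ} (hb : 1 / 2 ≤ b) (hba : b ≤ a) (ha : a ≤ 1)
    (hGF : G ≤ F) (hF'F : F' ≤ F) (hsum : G + G' ≤ F + F') :
    b * G + (1 - b) * G' ≤ a * F + (1 - a) * F' := by
  nlinarith [mul_nonneg (sub_nonneg.2 hba) (sub_nonneg.2 hF'F),
    mul_nonneg (by linarith : 0 ≤ 2 * b - 1) (sub_nonneg.2 hGF)]

lemma mul_add_one_sub_mul_lt {a b F G F' G' : ℝ} (hb : 1 / 2 ≤ b) (hba : b < a) (ha : a ≤ 1)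
    (hGF : G ≤ F) (hF'F : F' < F) (hsum : G + G' ≤ F + F') :
    b * G + (1 - b) * G' < a * F + (1 - a) * F' := by
  nlinarith [mul_pos (sub_pos.2 hba) (sub_pos.2 hF'F),
    mul_nonneg (by linarith : 0 ≤ 2 * b - 1) (sub_nonneg.2 hGF)]

section ProdOneSub

variable {ι : Type*} {s : Finset ι} {f g : ι → ℝ}

lemma prod_one_sub_le_prod (hf : ∀ k ∈ s, 1 / 2 ≤ f k) (hf1 : ∀ k ∈ s, f k ≤ 1) :
    ∏ k ∈ s, (1 - f k) ≤ ∏ k ∈ s, f k :=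
  Finset.prod_le_prod (fun k hk => by linarith [hf1 k hk]) fun k hk => by linarith [hf k hk]

lemma prod_add_prod_one_sub_le [DecidableEq ι] (hg : ∀ k ∈ s, 1 / 2 ≤ g k)
    (hgf : ∀ k ∈ s, g k ≤ f k) (hf : ∀ k ∈ s, f k ≤ 1) :
    ∏ k ∈ s, g k + ∏ k ∈ s, (1 - g k) ≤ ∏ k ∈ s, f k + ∏ k ∈ s, (1 - f k) := by
  induction s using Finset.induction_on with
  | empty => simp
  | insert a s ha ih =>
    simp only [Finset.mem_insert, forall_eq_or_imp] at hg hgf hf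
    simp only [Finset.prod_insert ha]
    refine mul_add_one_sub_mul_le hg.1 hgf.1 hf.1 ?_ ?_ (ih hg.2 hgf.2 hf.2)
    · exact Finset.prod_le_prod (fun k hk => by linarith [hg.2 k hk]) hgf.2
    · exact prod_one_sub_le_prod (fun k hk => (hg.2 k hk).trans (hgf.2 k hk)) hf.2

lemma prod_add_prod_one_sub_lt [DecidableEq ι] (hs : 1 < s.card) (hg : ∀ k ∈ s, 1 / 2 < g k)
    (hgf : ∀ k ∈ s, g k ≤ f k) (hf : ∀ k ∈ s, f k < 1) {k₀ : ι} (hk₀ : k₀ ∈ s)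
    (hlt : g k₀ < f k₀) :
    ∏ k ∈ s, g k + ∏ k ∈ s, (1 - g k) < ∏ k ∈ s, f k + ∏ k ∈ s, (1 - f k) := by
  set t := s.erase k₀
  have ht : t.Nonempty := by
    rw [← Finset.card_pos, Finset.card_erase_of_mem hk₀]
    omega
  have htg : ∀ k ∈ t, 1 / 2 ≤ g k := fun k hk => (hg k (Finset.mem_of_mem_erase hk)).le
  have htgf : ∀ k ∈ t, g k ≤ f k := fun k hk => hgf k (Finset.mem_of_mem_erase hk)
  have htf : ∀ k ∈ t, f k ≤ 1 := fun k hk => (hf k (Finset.mem_of_mem_erase hk)).le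
  simp only [← Finset.mul_prod_erase s _ hk₀]
  refine mul_add_one_sub_mul_lt (hg k₀ hk₀).le hlt (hf k₀ hk₀).le
    (Finset.prod_le_prod (fun k hk => by linarith [htg k hk]) htgf) ?_
    (prod_add_prod_one_sub_le htg htgf htf)
  refine Finset.prod_lt_prod_of_nonempty (fun k hk => ?_) (fun k hk => ?_) ht
  · linarith [hf k (Finset.mem_of_mem_erase hk)]
  · linarith [hg k (Finset.mem_of_mem_erase hk), htgf k hk]

end ProdOneSub

section IndependentMaximum

variable {ι : Type*} {P : Measure Ω} [IsProbabilityMeasure P] {Y : ι → Ω → ℝ}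

lemma measure_setOf_eq_eq_zero (hY : ∀ k, Measurable (Y k)) (hind : iIndepFun Y P)
    (hatom : ∀ k a, P {ω | Y k ω = a} = 0) {i j : ι} (hij : i ≠ j) :
    P {ω | Y i ω = Y j ω} = 0 := by
  have hD : MeasurableSet {p : ℝ × ℝ | p.1 = p.2} := measurableSet_diagonal
  have hmap : P.map (fun ω => (Y i ω, Y j ω)) = (P.map (Y i)).prod (P.map (Y j)) :=
    (indepFun_iff_map_prod_eq_prod_map_map (hY i).aemeasurable (hY j).aemeasurable).1
      (hind.indepFun hij)
  change P ((fun ω => (Y i ω, Y j ω)) ⁻¹' {p | p.1 = p.2}) = 0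
  rw [← Measure.map_apply (by fun_prop) hD, hmap, Measure.prod_apply hD]
  refine (lintegral_congr fun t => ?_).trans lintegral_zero
  have hslice : Prod.mk t ⁻¹' {p : ℝ × ℝ | p.1 = p.2} = {t} := by
    ext s
    exact eq_comm
  rw [hslice, Measure.map_apply (hY j) (measurableSet_singleton t)]
  exact hatom j t

variable [Fintype ι]

lemma sum_measureReal_forall_le_eq_one [Nonempty ι] (hY : ∀ k, Measurable (Y k))
    (hind : iIndepFun Y P) (hatom : ∀ k a, P {ω | Y k ω = a} = 0) :
    ∑ i, P.real {ω | ∀ k, Y k ω ≤ Y i ω} = 1 := by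
  set A : ι → Set Ω := fun i => {ω | ∀ k, Y k ω ≤ Y i ω}
  have hA (i : ι) : MeasurableSet (A i) := by
    simp only [A, Set.ofPred_forall]
    exact .iInter fun k => measurableSet_le (hY k) (hY i)
  have hcover : ⋃ i, A i = Set.univ :=
    Set.eq_univ_of_forall fun ω => Set.mem_iUnion.2 (Finite.exists_max fun k => Y k ω)
  have := measure_biUnion_finset₀ (μ := P) (s := Finset.univ) (f := A)
    (fun i _ j _ hij => measure_mono_null (fun ω hω => le_antisymm (hω.2 i) (hω.1 j))
      (measure_setOf_eq_eq_zero hY hind hatom hij))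
    fun i _ => (hA i).nullMeasurableSet
  simp only [Finset.mem_univ, Set.iUnion_true, hcover, measure_univ] at this
  simp only [measureReal_def]
  rw [← ENNReal.toReal_sum fun i _ => measure_ne_top P _, ← this, ENNReal.toReal_one]

variable [DecidableEq ι]

lemma map_prodMk_restrict_erase (hY : ∀ k, Measurable (Y k)) (hind : iIndepFun Y P) (i : ι) :
    P.map (fun ω => (Y i ω, fun k : ↥(Finset.univ.erase i) => Y k ω)) =
      (P.map (Y i)).prod (Measure.pi fun k : ↥(Finset.univ.erase i) => P.map (Y k)) := by
  have hW : Measurable fun ω (k : ↥(Finset.univ.erase i)) => Y k ω :=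
    measurable_pi_lambda _ fun k => hY k
  have hpair : IndepFun (Y i) (fun ω (k : ↥(Finset.univ.erase i)) => Y k ω) P :=
    (hind.indepFun_finset {i} (Finset.univ.erase i) (by simp) hY).comp
      (measurable_pi_apply (⟨i, Finset.mem_singleton_self i⟩ : ↥({i} : Finset ι)))
      measurable_id
  rw [(indepFun_iff_map_prod_eq_prod_map_map (hY i).aemeasurable hW.aemeasurable).1 hpair]
  exact congrArg _ ((hind.restrict _).map_fun_eq_pi_map fun k => (hY k).aemeasurable)

lemma measureReal_forall_le_eq_integral (hY : ∀ k, Measurable (Y k)) (hind : iIndepFun Y P)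
    (i : ι) :
    P.real {ω | ∀ k, Y k ω ≤ Y i ω} =
      ∫ ω, ∏ k ∈ Finset.univ.erase i, cdf (P.map (Y k)) (Y i ω) ∂P := by
  set E : Set (ℝ × (↥(Finset.univ.erase i) → ℝ)) := {p | ∀ k, p.2 k ≤ p.1}
  have hE : MeasurableSet E := by
    simp only [E, Set.ofPred_forall]
    exact .iInter fun k => measurableSet_le (by fun_prop) (by fun_prop)
  have hpreimage : {ω | ∀ k, Y k ω ≤ Y i ω} =
      (fun ω => (Y i ω, fun k : ↥(Finset.univ.erase i) => Y k ω)) ⁻¹' E := by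
    ext ω
    refine ⟨fun h k => h k, fun h k => ?_⟩
    obtain rfl | hk := eq_or_ne k i
    · exact le_rfl
    · exact h ⟨k, by simpa using hk⟩
  have hslice (t : ℝ) : Prod.mk t ⁻¹' E = Set.univ.pi fun _ => Set.Iic t := by
    ext w
    simp only [E, Set.mem_preimage, Set.mem_ofPred_eq, Set.mem_univ_pi, Set.mem_Iic]
  have hF : Measurable fun t => ∏ k ∈ Finset.univ.erase i, cdf (P.map (Y k)) t :=
    Finset.measurable_prod _ fun k _ => (cdf _).mono.measurable
  rw [← integral_map (hY i).aemeasurable hF.aestronglyMeasurable,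
    integral_eq_lintegral_of_nonneg_ae
      (ae_of_all _ fun t => Finset.prod_nonneg fun k _ => cdf_nonneg _ t) hF.aestronglyMeasurable,
    measureReal_def, hpreimage, ← Measure.map_apply (by fun_prop) hE,
    map_prodMk_restrict_erase hY hind, Measure.prod_apply hE]
  congr 1
  refine lintegral_congr fun t => ?_
  rw [hslice, Measure.pi_pi, ENNReal.ofReal_prod_of_nonneg fun k _ => cdf_nonneg _ t,
    Finset.prod_coe_sort (Finset.univ.erase i) fun k => P.map (Y k) (Set.Iic t)]
  refine Finset.prod_congr rfl fun k _ => ?_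
  have := Measure.isProbabilityMeasure_map (μ := P) (hY k).aemeasurable
  exact (ofReal_cdf _ t).symm

end IndependentMaximum

section Chebyshev

variable {ι : Type*} [Fintype ι] {f g : ι → ℝ}

lemma sum_sum_sub_mul_sub (f g : ι → ℝ) :
    ∑ i, ∑ j, (f i - f j) * (g i - g j) =
      2 * (Fintype.card ι * ∑ i, f i * g i - (∑ i, f i) * ∑ i, g i) := by
  simp only [sub_mul, mul_sub, Finset.sum_sub_distrib, Finset.sum_const, Finset.card_univ,
    nsmul_eq_mul, ← Finset.mul_sum, ← Finset.sum_mul]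
  ring

lemma _root_.Antivary.card_mul_sum_lt_sum_mul_sum (hfg : Antivary f g) {i j : ι} (hf : f i < f j)
    (hg : g j < g i) :
    Fintype.card ι * ∑ i, f i * g i < (∑ i, f i) * ∑ i, g i := by
  have hneg : ∑ a, ∑ b, (f a - f b) * (g a - g b) < 0 :=
    Finset.sum_neg' (fun a _ => Finset.sum_nonpos fun b _ => hfg.sub_mul_sub_nonpos b a)
      ⟨i, Finset.mem_univ i, Finset.sum_neg' (fun b _ => hfg.sub_mul_sub_nonpos b i)
        ⟨j, Finset.mem_univ j, mul_neg_of_neg_of_pos (sub_neg.2 hf) (sub_pos.2 hg)⟩⟩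
  rw [sum_sum_sub_mul_sub] at hneg
  linarith

lemma card_pos_of_sum_eq_one (hf : ∑ i, f i = 1) : (0 : ℝ) < Fintype.card ι := by
  have : Nonempty ι := by
    by_contra h
    simp [not_nonempty_iff.1 h] at hf
  exact_mod_cast Fintype.card_pos

lemma sum_mul_le_one_div_card (hfg : Antivary f g) (hf : ∑ i, f i = 1) (hg : ∑ i, g i = 1) :
    ∑ i, f i * g i ≤ 1 / Fintype.card ι := by
  rw [le_div_iff₀ (card_pos_of_sum_eq_one hf), mul_comm]
  simpa [hf, hg] using hfg.card_mul_sum_le_sum_mul_sum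

lemma sum_mul_eq_one_div_card_iff (hfg : ∀ i j, f i < f j → g j < g i) (hf : ∑ i, f i = 1)
    (hg : ∑ i, g i = 1) :
    ∑ i, f i * g i = 1 / Fintype.card ι ↔ ∀ i, f i = 1 / Fintype.card ι := by
  have hcard := card_pos_of_sum_eq_one hf
  refine ⟨fun heq => ?_, fun hconst => by simp only [hconst, ← Finset.mul_sum, hg, mul_one]⟩
  by_contra hne
  obtain ⟨i, j, hij⟩ : ∃ i j, f i < f j := by
    by_contra! hle
    refine hne fun i => ?_
    rw [Finset.sum_congr rfl fun k _ => le_antisymm (hle i k) (hle k i), Finset.sum_const,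
      Finset.card_univ, nsmul_eq_mul] at hf
    rw [eq_div_iff hcard.ne']
    linarith
  have hanti : Antivary f g := fun a b hab => not_lt.1 fun h => (hfg a b h).not_gt hab
  have := hanti.card_mul_sum_lt_sum_mul_sum hij (hfg i j hij)
  rw [hf, hg, heq, mul_one_div_cancel hcard.ne', mul_one] at this
  exact lt_irrefl _ this

end Chebyshev

section WinnerIntegrand

variable {ι : Type*} [DecidableEq ι] {c : ι → ℝ}

lemma div_le_div_swap (hc : ∀ k, 0 < c k) {i j k : ι} (hji : c j ≤ c i) (hki : k ≠ i) :
    c k / c i ≤ c (Equiv.swap i j k) / c j := by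
  obtain rfl | hkj := eq_or_ne k j
  · rw [Equiv.swap_apply_right, div_le_div_iff₀ (hc i) (hc k)]
    exact mul_self_le_mul_self (hc k).le hji
  · rw [Equiv.swap_apply_of_ne_of_ne hki hkj]
    exact div_le_div_of_nonneg_left (hc k).le (hc j) hji

lemma div_lt_div_swap (hc : ∀ k, 0 < c k) {i j : ι} (hji : c j < c i) :
    c j / c i < c (Equiv.swap i j j) / c j := by
  rw [Equiv.swap_apply_right, div_lt_div_iff₀ (hc i) (hc j)]
  exact mul_self_lt_mul_self (hc j).le hji

variable [Fintype ι]

noncomputable def winnerIntegrand (c : ι → ℝ) (i : ι) (t : ℝ) : ℝ :=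
  ∏ k ∈ Finset.univ.erase i, gaussCDF (c k / c i * t)

lemma integrable_winnerIntegrand (c : ι → ℝ) (i : ι) : Integrable (winnerIntegrand c i) γ := by
  refine .of_bound (Finset.measurable_prod _ fun k _ =>
    measurable_gaussCDF.comp (measurable_const_mul _)).aestronglyMeasurable 1
    (ae_of_all _ fun t => ?_)
  rw [winnerIntegrand, Real.norm_of_nonneg (Finset.prod_nonneg fun k _ => gaussCDF_nonneg _)]
  exact Finset.prod_le_one (fun k _ => gaussCDF_nonneg _) fun k _ => gaussCDF_le_one _

lemma winnerIntegrand_add_neg (c : ι → ℝ) (i : ι) (t : ℝ) :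
    winnerIntegrand c i t + winnerIntegrand c i (-t) =
      ∏ k ∈ Finset.univ.erase i, gaussCDF (c k / c i * t) +
        ∏ k ∈ Finset.univ.erase i, (1 - gaussCDF (c k / c i * t)) := by
  simp only [winnerIntegrand, mul_neg, gaussCDF_neg]

lemma prod_erase_eq_prod_erase_swap {M : Type*} [CommMonoid M] (f : ι → M) (i j : ι) :
    ∏ k ∈ Finset.univ.erase j, f k = ∏ k ∈ Finset.univ.erase i, f (Equiv.swap i j k) :=
  (Finset.prod_equiv (Equiv.swap i j) (by simp [Equiv.swap_apply_eq_iff]) (by simp)).symm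

lemma winnerIntegrand_add_neg_le (hc : ∀ k, 0 < c k) {i j : ι} (hji : c j ≤ c i) {t : ℝ}
    (ht : 0 ≤ t) :
    winnerIntegrand c i t + winnerIntegrand c i (-t) ≤
      winnerIntegrand c j t + winnerIntegrand c j (-t) := by
  rw [winnerIntegrand_add_neg, winnerIntegrand_add_neg, prod_erase_eq_prod_erase_swap _ i j,
    prod_erase_eq_prod_erase_swap (fun k => 1 - gaussCDF (c k / c j * t)) i j]
  refine prod_add_prod_one_sub_le
    (fun k _ => half_le_gaussCDF (mul_nonneg (div_nonneg (hc k).le (hc i).le) ht))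
    (fun k hk => gaussCDF_strictMono.monotone ?_) fun k _ => gaussCDF_le_one _
  exact mul_le_mul_of_nonneg_right (div_le_div_swap hc hji (Finset.ne_of_mem_erase hk)) ht

lemma winnerIntegrand_add_neg_lt (hc : ∀ k, 0 < c k) (hcard : 3 ≤ Fintype.card ι) {i j : ι}
    (hji : c j < c i) {t : ℝ} (ht : 0 < t) :
    winnerIntegrand c i t + winnerIntegrand c i (-t) <
      winnerIntegrand c j t + winnerIntegrand c j (-t) := by
  have hj : j ∈ Finset.univ.erase i :=
    Finset.mem_erase.2 ⟨fun h => hji.ne (h ▸ rfl), Finset.mem_univ j⟩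
  have hcard' : 1 < (Finset.univ.erase i).card := by
    rw [Finset.card_erase_of_mem (Finset.mem_univ i), Finset.card_univ]
    omega
  rw [winnerIntegrand_add_neg, winnerIntegrand_add_neg, prod_erase_eq_prod_erase_swap _ i j,
    prod_erase_eq_prod_erase_swap (fun k => 1 - gaussCDF (c k / c j * t)) i j]
  refine prod_add_prod_one_sub_lt hcard'
    (fun k _ => half_lt_gaussCDF (mul_pos (div_pos (hc k) (hc i)) ht))
    (fun k hk => gaussCDF_strictMono.monotone ?_) (fun k _ => gaussCDF_lt_one _) hj
    (gaussCDF_strictMono (mul_lt_mul_of_pos_right (div_lt_div_swap hc hji) ht))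
  exact mul_le_mul_of_nonneg_right (div_le_div_swap hc hji.le (Finset.ne_of_mem_erase hk)) ht.le

lemma integral_winnerIntegrand_le (hc : ∀ k, 0 < c k) {i j : ι} (hji : c j ≤ c i) :
    ∫ t, winnerIntegrand c i t ∂γ ≤ ∫ t, winnerIntegrand c j t ∂γ :=
  integral_le_integral_of_add_comp_neg_le (integrable_winnerIntegrand c i)
    (integrable_winnerIntegrand c j) fun _ ht => winnerIntegrand_add_neg_le hc hji ht

lemma integral_winnerIntegrand_lt (hc : ∀ k, 0 < c k) (hcard : 3 ≤ Fintype.card ι) {i j : ι}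
    (hji : c j < c i) :
    ∫ t, winnerIntegrand c i t ∂γ < ∫ t, winnerIntegrand c j t ∂γ :=
  integral_lt_integral_of_add_comp_neg_lt (integrable_winnerIntegrand c i)
    (integrable_winnerIntegrand c j) (fun _ ht => winnerIntegrand_add_neg_le hc hji.le ht)
    fun _ ht => winnerIntegrand_add_neg_lt hc hcard hji ht

lemma integral_winnerIntegrand_of_card_eq_two (hcard : Fintype.card ι = 2) (i : ι) :
    ∫ t, winnerIntegrand c i t ∂γ = 1 / 2 := by
  obtain ⟨j, hj⟩ := Finset.card_eq_one.1 <| by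
    rw [Finset.card_erase_of_mem (Finset.mem_univ i), Finset.card_univ, hcard]
  have hsum (t : ℝ) : winnerIntegrand c i t + winnerIntegrand c i (-t) = 1 := by
    rw [winnerIntegrand_add_neg, hj, Finset.prod_singleton, Finset.prod_singleton,
      add_sub_cancel]
  have := integral_add_comp_neg_gaussianReal (integrable_winnerIntegrand c i)
  simp only [hsum, integral_const, probReal_univ, smul_eq_mul, mul_one] at this
  linarith

end WinnerIntegrand

section GaussianWinner

variable {ι : Type*} [Fintype ι] {P : Measure Ω} [IsProbabilityMeasure P] {Z : ι → Ω → ℝ}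
  {c : ι → ℝ}

lemma sum_measureReal_winner_eq_one [Nonempty ι] (hZ : ∀ k, Measurable (Z k))
    (hind : iIndepFun Z P) (hlaw : ∀ k, P.map (Z k) = γ) (hc : ∀ k, 0 < c k) :
    ∑ i, P.real {ω | ∀ k, Z k ω / c k ≤ Z i ω / c i} = 1 := by
  refine sum_measureReal_forall_le_eq_one (fun k => (hZ k).div_const (c k))
    (hind.comp _ fun k => measurable_id.div_const (c k)) fun k a => ?_
  have hpre : {ω | Z k ω / c k = a} = Z k ⁻¹' {a * c k} :=
    Set.ext fun ω => div_eq_iff (hc k).ne'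
  rw [hpre, ← Measure.map_apply (hZ k) (measurableSet_singleton _), hlaw, measure_singleton]

lemma measureReal_winner_eq_integral [DecidableEq ι] (hZ : ∀ k, Measurable (Z k))
    (hind : iIndepFun Z P) (hlaw : ∀ k, P.map (Z k) = γ) (hc : ∀ k, 0 < c k) (i : ι) :
    P.real {ω | ∀ k, Z k ω / c k ≤ Z i ω / c i} = ∫ t, winnerIntegrand c i t ∂γ := by
  have hcdf (k : ι) (s : ℝ) : cdf (P.map fun ω => Z k ω / c k) s = gaussCDF (c k * s) := by
    have := Measure.isProbabilityMeasure_map (μ := P) ((hZ k).div_const (c k)).aemeasurable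
    have hpre : (fun ω => Z k ω / c k) ⁻¹' Set.Iic s = Z k ⁻¹' Set.Iic (c k * s) := by
      ext ω
      simp only [Set.mem_preimage, Set.mem_Iic, div_le_iff₀' (hc k)]
    rw [cdf_eq_real, measureReal_def, Measure.map_apply ((hZ k).div_const _) measurableSet_Iic,
      hpre, ← Measure.map_apply (hZ k) measurableSet_Iic, hlaw, gaussCDF]
  rw [measureReal_forall_le_eq_integral (fun k => (hZ k).div_const (c k))
    (hind.comp _ fun k => measurable_id.div_const (c k)) i]
  calc _ = ∫ ω, winnerIntegrand c i (Z i ω) ∂P := by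
        refine integral_congr_ae (ae_of_all _ fun ω => Finset.prod_congr rfl fun k _ => ?_)
        rw [hcdf, mul_div_assoc', div_mul_eq_mul_div]
    _ = ∫ t, winnerIntegrand c i t ∂γ := by
        rw [← hlaw i, integral_map (hZ i).aemeasurable]
        exact (hlaw i ▸ integrable_winnerIntegrand c i).aestronglyMeasurable

end GaussianWinner

/-- **Lemma (dot-product inequality for the pure-noise winner map).**
Let `r ≥ 2`, let `x` lie in the interior of the simplex `Δ_r`, and let `Z_1,…,Z_r` be i.i.d.
standard normals. With `U_i(x) = Z_i/√(x_i)` and `g_i(x) = P(U_i(x) = max_j U_j(x))`, one has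
`∑ i, x_i g_i(x) ≤ 1/r`; if `r = 2` equality holds (for every such `x`), and if `r ≥ 3`
equality holds if and only if `x = (1/r, …, 1/r)`. -/
theorem winner_map_dot_product
    {r : ℕ} (hr : 2 ≤ r) (P : Measure Ω) [IsProbabilityMeasure P]
    (Z : Fin r → Ω → ℝ) (measZ : ∀ i, Measurable (Z i))
    (indepZ : iIndepFun Z P)
    (gaussZ : ∀ i, Measure.map (Z i) P = gaussianReal 0 1)
    (x : Fin r → ℝ) (hxpos : ∀ i, 0 < x i) (hxsum : ∑ i, x i = 1) :
    (∑ i, x i *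
        (P {ω | ∀ k, Z k ω / Real.sqrt (x k) ≤ Z i ω / Real.sqrt (x i)}).toReal ≤ 1 / r) ∧
    (r = 2 →
      ∑ i, x i *
        (P {ω | ∀ k, Z k ω / Real.sqrt (x k) ≤ Z i ω / Real.sqrt (x i)}).toReal = 1 / r) ∧
    (3 ≤ r →
      ((∑ i, x i *
          (P {ω | ∀ k, Z k ω / Real.sqrt (x k) ≤ Z i ω / Real.sqrt (x i)}).toReal = 1 / r) ↔
        ∀ i, x i = 1 / r)) := by
  have : Nonempty (Fin r) := ⟨⟨0, by omega⟩⟩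
  have hc (k : Fin r) : 0 < √(x k) := Real.sqrt_pos.2 (hxpos k)
  set g : Fin r → ℝ := fun i =>
    (P {ω | ∀ k, Z k ω / Real.sqrt (x k) ≤ Z i ω / Real.sqrt (x i)}).toReal
  show (∑ i, x i * g i ≤ 1 / r) ∧ (r = 2 → ∑ i, x i * g i = 1 / r) ∧
    (3 ≤ r → (∑ i, x i * g i = 1 / r ↔ ∀ i, x i = 1 / r))
  have hg (i : Fin r) : g i = ∫ t, winnerIntegrand (fun k => √(x k)) i t ∂γ :=
    measureReal_winner_eq_integral measZ indepZ gaussZ hc i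
  have hg_sum : ∑ i, g i = 1 := sum_measureReal_winner_eq_one measZ indepZ gaussZ hc
  have hanti : Antivary x g := fun i j hgij => not_lt.1 fun hx => hgij.not_ge <| by
    rw [hg, hg]
    exact integral_winnerIntegrand_le hc (Real.sqrt_le_sqrt hx.le)
  refine ⟨by simpa using sum_mul_le_one_div_card hanti hxsum hg_sum, fun hr2 => ?_, fun hr3 => ?_⟩
  · have hg2 (i : Fin r) : g i = 1 / 2 := by
      rw [hg, integral_winnerIntegrand_of_card_eq_two (by simp [hr2])]
    simp only [hg2, ← Finset.sum_mul, hxsum, hr2]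
    norm_num
  · have hstrict (i j : Fin r) (hij : x i < x j) : g j < g i := by
      rw [hg, hg]
      exact integral_winnerIntegrand_lt hc (by simpa using hr3) (Real.sqrt_lt_sqrt (hxpos i).le hij)
    simpa using sum_mul_eq_one_div_card_iff hstrict hxsum hg_sum

end ThompsonStability
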